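/- arXiv:0909.1097 — 2 statements merged into one kernel-verified Lean document; each statement's English description precedes it below -/
import Mathlib

section
/- Let β ∈ ℝ, γ > 0, and let μ, ν be compactly supported probability measures on ℝ with infinite support such that μ = Φ_{β,γ}[ν]. Then for every n ≥ 1, ∫ (P^μ_n)² dμ = γ ∫ (P^ν_{n−1})² dν. -/
open MeasureTheory Polynomial

/-- Moments of a measure on ℝ. -/
noncomputable def mom (ρ : Measure ℝ) (k : ℕ) : ℝ := ∫ x, x ^ k ∂ρ

/-- A measure has compact support. -/
def CompactSupp (μ : Measure ℝ) : Prop := ∃ K : Set ℝ, IsCompact K ∧ μ Kᶜ = 0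

/-- The (topological) support of a measure on ℝ. -/
def msupport (μ : Measure ℝ) : Set ℝ := {x | ∀ U ∈ nhds x, μ U ≠ 0}

/-- `JacobiShift β γ mν mμ` says (at the level of moment sequences) that `μ = Φ_{β,γ}[ν]`. -/
def JacobiShift (β γ : ℝ) (mν mμ : ℕ → ℝ) : Prop :=
  ∀ n : ℕ, 1 ≤ n →
    mμ n = β * mμ (n - 1) + γ * ∑ i ∈ Finset.range (n - 1), mν i * mμ (n - 2 - i)

/-- `P` is the family of monic orthogonal polynomials of `ρ`. -/
def IsMonicOPS (ρ : Measure ℝ) (P : ℕ → Polynomial ℝ) : Prop :=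
  (∀ n, (P n).Monic) ∧ (∀ n, (P n).natDegree = n) ∧
  ∀ n m : ℕ, n ≠ m → ∫ x, (P n).eval x * (P m).eval x ∂ρ = 0

/-!
Write `Δ_ν f (x) = ∫ (f x - f y) / (x - y) dν(y)`. In terms of the moment functionals, the relation
`μ = Φ_{β,γ}[ν]` says exactly that `∫ (x - β) p dμ = γ ∫ Δ_ν p dμ` for every polynomial `p`.
For `f = P^ν_{n-1}` put `Q = (X - β) f - γ Δ_ν f`, a monic polynomial of degree `n`. The product
rule `Δ_ν (f X^m) = X^m Δ_ν f + ∑_{i<m} (∫ f y^i dν) X^{m-1-i}` gives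
`∫ Q x^m dμ = γ ∑_{i<m} (∫ f y^i dν) (∫ x^{m-1-i} dμ)`, and by the orthogonality of `f` this
vanishes for `m < n` and equals `γ ∫ f y^{n-1} dν = γ ∫ f² dν` for `m = n`. So `Q = P^μ_n`, and
`∫ (P^μ_n)² dμ = ∫ Q x^n dμ = γ ∫ f² dν`.
-/

namespace Polynomial

open Finset

variable {R : Type*} [CommRing R]

theorem degreeLT_le_comap_of_X_pow {M : Type*} [AddCommMonoid M] [Module R M] {n : ℕ}
    (f : R[X] →ₗ[R] M) (S : Submodule R M) (h : ∀ k < n, f (X ^ k) ∈ S) :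
    degreeLT R n ≤ S.comap f := by
  classical
  rw [degreeLT_eq_span_X_pow, Submodule.span_le]
  intro g hg
  obtain ⟨k, hk, rfl⟩ := mem_image.1 hg
  exact h k (mem_range.1 hk)

theorem Monic.sub_X_pow_mem_degreeLT [Nontrivial R] {q : R[X]} {n : ℕ} (hq : q.Monic)
    (hqn : q.natDegree = n) : q - X ^ n ∈ degreeLT R n := by
  have hdeg : q.degree = n := by rw [degree_eq_natDegree hq.ne_zero, hqn]
  rw [mem_degreeLT, ← hdeg]
  exact degree_sub_lt_left (by rw [hdeg, degree_X_pow]) hq.ne_zero (by simp [hq.leadingCoeff])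

theorem map_mul_eq_map_mul_X_pow_of_sub_mem {L : R[X] →ₗ[R] R} {p q : R[X]} {n : ℕ}
    (hp : ∀ g ∈ degreeLT R n, L (p * g) = 0) (hq : q - X ^ n ∈ degreeLT R n) :
    L (p * q) = L (p * X ^ n) := by
  have h := hp _ hq
  rwa [mul_sub, map_sub, sub_eq_zero] at h

theorem map_mul_eq_zero_of_orthogonal [Nontrivial R] {L : R[X] →ₗ[R] R} {P : ℕ → R[X]}
    (hP : ∀ k, (P k).Monic) (hPdeg : ∀ k, (P k).natDegree = k) {n : ℕ}
    (horth : ∀ k < n, L (P n * P k) = 0) : ∀ g ∈ degreeLT R n, L (P n * g) = 0 := by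
  let S : Sequence R := ⟨P, fun k => by rw [degree_eq_natDegree (hP k).ne_zero, hPdeg k]⟩
  have hspan :
      Submodule.span R (P '' Set.Iio n) ≤ LinearMap.ker (L ∘ₗ LinearMap.mulLeft R (P n)) := by
    rw [Submodule.span_le]
    rintro _ ⟨k, hk, rfl⟩
    exact horth k hk
  rw [← S.span_degreeLT fun k _ => by simp [S, (hP k).leadingCoeff]]
  exact fun g hg => hspan hg

theorem map_C_mul (L : R[X] →ₗ[R] R) (a : R) (p : R[X]) : L (C a * p) = a * L p := by
  rw [← smul_eq_C_mul, map_smul, smul_eq_mul]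

noncomputable def momentFunctional (m : ℕ → R) : R[X] →ₗ[R] R :=
  lsum fun k => m k • LinearMap.id

@[simp]
theorem momentFunctional_monomial (m : ℕ → R) (k : ℕ) (a : R) :
    momentFunctional m (monomial k a) = a * m k := by
  simp [momentFunctional, mul_comm]

@[simp]
theorem momentFunctional_X_pow (m : ℕ → R) (k : ℕ) : momentFunctional m (X ^ k) = m k := by
  rw [← monomial_one_right_eq_X_pow, momentFunctional_monomial, one_mul]

/-- `divDiff L p` is `L` applied in `y` to the divided difference `(p(X) - p(y)) / (X - y)`. -/
noncomputable def divDiff (L : R[X] →ₗ[R] R) : R[X] →ₗ[R] R[X] :=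
  lsum fun k => LinearMap.toSpanSingleton R R[X] (∑ i ∈ range k, C (L (X ^ i)) * X ^ (k - 1 - i))

theorem divDiff_X_pow (L : R[X] →ₗ[R] R) (k : ℕ) :
    divDiff L (X ^ k) = ∑ i ∈ range k, C (L (X ^ i)) * X ^ (k - 1 - i) := by
  simp [divDiff, ← monomial_one_right_eq_X_pow]

theorem divDiff_C_mul (L : R[X] →ₗ[R] R) (a : R) (p : R[X]) :
    divDiff L (C a * p) = C a * divDiff L p := by
  rw [← smul_eq_C_mul, map_smul, smul_eq_C_mul]

theorem X_mul_sum_range_mul_X_pow (c : ℕ → R[X]) (k : ℕ) :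
    X * ∑ i ∈ range k, c i * X ^ (k - 1 - i) = ∑ i ∈ range k, c i * X ^ (k - i) := by
  rw [mul_sum]
  refine sum_congr rfl fun i hi => ?_
  rw [show k - i = k - 1 - i + 1 by grind, pow_succ]
  ring

theorem divDiff_X_pow_succ (L : R[X] →ₗ[R] R) (k : ℕ) :
    divDiff L (X ^ (k + 1)) = X * divDiff L (X ^ k) + C (L (X ^ k)) := by
  rw [divDiff_X_pow, divDiff_X_pow, sum_range_succ, X_mul_sum_range_mul_X_pow, Nat.add_sub_cancel,
    Nat.sub_self, pow_zero, mul_one]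

theorem divDiff_mul_X (L : R[X] →ₗ[R] R) (p : R[X]) :
    divDiff L (p * X) = X * divDiff L p + C (L p) := by
  induction p using Polynomial.induction_on' with
  | add p q hp hq => rw [add_mul, map_add, map_add, hp, hq, map_add, C_add]; ring
  | monomial k a =>
    rw [← C_mul_X_pow_eq_monomial, mul_assoc, ← pow_succ, divDiff_C_mul, divDiff_C_mul,
      divDiff_X_pow_succ, map_C_mul, C_mul]
    ring

theorem divDiff_mul_X_pow (L : R[X] →ₗ[R] R) (p : R[X]) (m : ℕ) :
    divDiff L (p * X ^ m) =
      X ^ m * divDiff L p + ∑ i ∈ range m, C (L (p * X ^ i)) * X ^ (m - 1 - i) := by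
  induction m with
  | zero => simp
  | succ m ih =>
    rw [pow_succ, ← mul_assoc, divDiff_mul_X, ih, mul_add, X_mul_sum_range_mul_X_pow,
      sum_range_succ, Nat.add_sub_cancel, Nat.sub_self, pow_zero, mul_one]
    ring

theorem divDiff_mem_degreeLT (L : R[X] →ₗ[R] R) {n : ℕ} {p : R[X]}
    (hp : p ∈ degreeLT R (n + 1)) : divDiff L p ∈ degreeLT R n := by
  refine degreeLT_le_comap_of_X_pow (divDiff L) (degreeLT R n) (fun k hk => ?_) hp
  rw [divDiff_X_pow]
  refine Submodule.sum_mem _ fun i hi => mem_degreeLT.2 ?_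
  refine (degree_C_mul_X_pow_le _ _).trans_lt ?_
  rw [mem_range] at hi
  exact_mod_cast (by omega : k - 1 - i < n)

/-- For `f = P^ν_{n-1}` this is `P^μ_n`. -/
noncomputable def shiftPoly (Lν : R[X] →ₗ[R] R) (β γ : R) (f : R[X]) : R[X] :=
  (X - C β) * f - C γ * divDiff Lν f

theorem map_shiftPoly_mul_X_pow {Lμ Lν : R[X] →ₗ[R] R} {β γ : R}
    (hshift : ∀ p, Lμ ((X - C β) * p) = γ * Lμ (divDiff Lν p)) (f : R[X]) (m : ℕ) :
    Lμ (shiftPoly Lν β γ f * X ^ m) =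
      γ * ∑ i ∈ range m, Lν (f * X ^ i) * Lμ (X ^ (m - 1 - i)) :=
  calc Lμ (shiftPoly Lν β γ f * X ^ m)
      = Lμ ((X - C β) * (f * X ^ m)) - γ * Lμ (X ^ m * divDiff Lν f) := by
        rw [shiftPoly, sub_mul, map_sub, mul_assoc, mul_assoc, map_C_mul,
          mul_comm (divDiff Lν f)]
    _ = γ * Lμ (divDiff Lν (f * X ^ m) - X ^ m * divDiff Lν f) := by
        rw [hshift, map_sub, mul_sub]
    _ = γ * ∑ i ∈ range m, Lν (f * X ^ i) * Lμ (X ^ (m - 1 - i)) := by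
        simp only [divDiff_mul_X_pow, add_sub_cancel_left, map_sum, map_C_mul]

theorem shiftPoly_sub_X_pow_mem_degreeLT [Nontrivial R] (Lν : R[X] →ₗ[R] R) (β γ : R)
    {f : R[X]} {n : ℕ} (hf : f.Monic) (hfn : f.natDegree = n) :
    shiftPoly Lν β γ f - X ^ (n + 1) ∈ degreeLT R (n + 1) := by
  have hmain : (X - C β) * f - X ^ (n + 1) ∈ degreeLT R (n + 1) :=
    ((monic_X_sub_C β).mul hf).sub_X_pow_mem_degreeLT
      (by rw [(monic_X_sub_C β).natDegree_mul hf, natDegree_X_sub_C, hfn, add_comm])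
  have hf_mem : f ∈ degreeLT R (n + 1) := by
    rw [mem_degreeLT, degree_eq_natDegree hf.ne_zero, hfn]
    exact_mod_cast n.lt_succ_self
  have hcorr : C γ * divDiff Lν f ∈ degreeLT R (n + 1) := by
    rw [← smul_eq_C_mul]
    exact degreeLT_mono n.le_succ (Submodule.smul_mem _ γ (divDiff_mem_degreeLT Lν hf_mem))
  convert Submodule.sub_mem _ hmain hcorr using 1
  rw [shiftPoly]
  ring

theorem map_sq_eq_mul_map_sq_of_shift [Nontrivial R] {Lμ Lν : R[X] →ₗ[R] R} {β γ : R}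
    (hshift : ∀ p, Lμ ((X - C β) * p) = γ * Lμ (divDiff Lν p)) (hLμ : Lμ 1 = 1) {n : ℕ}
    {p f : R[X]} (hp : p.Monic) (hpn : p.natDegree = n + 1)
    (hp_orth : ∀ g ∈ degreeLT R (n + 1), Lμ (p * g) = 0)
    (hf : f.Monic) (hfn : f.natDegree = n) (hf_orth : ∀ g ∈ degreeLT R n, Lν (f * g) = 0) :
    Lμ (p ^ 2) = γ * Lν (f ^ 2) := by
  set Q := shiftPoly Lν β γ f
  have hfX : ∀ i < n, Lν (f * X ^ i) = 0 := fun i hi =>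
    hf_orth _ (mem_degreeLT.2 (by rw [degree_X_pow]; exact_mod_cast hi))
  have hQ_orth : ∀ g ∈ degreeLT R (n + 1), Lμ (Q * g) = 0 := by
    intro g hg
    refine (Submodule.mem_bot R).1 <|
      degreeLT_le_comap_of_X_pow (Lμ ∘ₗ LinearMap.mulLeft R Q) ⊥ (fun m hm => ?_) hg
    rw [Submodule.mem_bot, LinearMap.comp_apply, LinearMap.mulLeft_apply,
      map_shiftPoly_mul_X_pow hshift]
    exact mul_eq_zero_of_right _ (sum_eq_zero fun i hi => by rw [hfX i (by grind), zero_mul])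
  have hQ_top : Lμ (Q * X ^ (n + 1)) = γ * Lν (f * X ^ n) := by
    rw [map_shiftPoly_mul_X_pow hshift, sum_range_succ,
      sum_eq_zero fun i hi => by rw [hfX i (mem_range.1 hi), zero_mul]]
    simp [hLμ]
  have hQ_sub := shiftPoly_sub_X_pow_mem_degreeLT Lν β γ hf hfn
  have hp_sub := hp.sub_X_pow_mem_degreeLT hpn
  calc Lμ (p ^ 2) = Lμ (p * X ^ (n + 1)) := by
        rw [sq]; exact map_mul_eq_map_mul_X_pow_of_sub_mem hp_orth hp_sub
    _ = Lμ (Q * p) := by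
        rw [mul_comm Q]; exact (map_mul_eq_map_mul_X_pow_of_sub_mem hp_orth hQ_sub).symm
    _ = Lμ (Q * X ^ (n + 1)) := map_mul_eq_map_mul_X_pow_of_sub_mem hQ_orth hp_sub
    _ = γ * Lν (f ^ 2) := by
        rw [hQ_top, sq,
          map_mul_eq_map_mul_X_pow_of_sub_mem hf_orth (hf.sub_X_pow_mem_degreeLT hfn)]

end Polynomial

theorem JacobiShift.moment_succ_sub {β γ : ℝ} {mν mμ : ℕ → ℝ} (h : JacobiShift β γ mν mμ)
    (k : ℕ) : mμ (k + 1) - β * mμ k = γ * ∑ i ∈ Finset.range k, mν i * mμ (k - 1 - i) := by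
  rw [h (k + 1) k.succ_pos, Nat.add_sub_cancel, add_sub_cancel_left]
  rfl

theorem JacobiShift.momentFunctional_X_sub_C_mul {β γ : ℝ} {mν mμ : ℕ → ℝ}
    (h : JacobiShift β γ mν mμ) (p : ℝ[X]) :
    momentFunctional mμ ((X - C β) * p) =
      γ * momentFunctional mμ (divDiff (momentFunctional mν) p) := by
  induction p using Polynomial.induction_on' with
  | add p q hp hq => rw [mul_add, map_add, map_add, hp, hq, map_add, mul_add]
  | monomial k a =>
    rw [← C_mul_X_pow_eq_monomial, mul_left_comm, map_C_mul, divDiff_C_mul, map_C_mul, sub_mul,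
      ← pow_succ', map_sub, map_C_mul]
    simp only [momentFunctional_X_pow, divDiff_X_pow, map_sum, map_C_mul]
    linear_combination a * h.moment_succ_sub k

theorem CompactSupp.integrable_eval {ρ : Measure ℝ} [IsFiniteMeasure ρ] (hcs : CompactSupp ρ)
    (p : ℝ[X]) : Integrable (fun x => p.eval x) ρ := by
  obtain ⟨K, hK, hKc⟩ := hcs
  obtain ⟨M, hM⟩ := hK.exists_bound_of_continuousOn p.continuous.continuousOn
  refine ⟨p.continuous.aestronglyMeasurable, HasFiniteIntegral.of_bounded (C := M) ?_⟩
  exact ae_iff.2 (measure_mono_null (fun x hx hxK => hx (hM x hxK)) hKc)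

theorem CompactSupp.integral_eval {ρ : Measure ℝ} [IsFiniteMeasure ρ] (hcs : CompactSupp ρ)
    (p : ℝ[X]) : ∫ x, p.eval x ∂ρ = momentFunctional (mom ρ) p := by
  induction p using Polynomial.induction_on' with
  | add p q hp hq =>
    simp only [eval_add, map_add]
    rw [integral_add (hcs.integrable_eval p) (hcs.integrable_eval q), hp, hq]
  | monomial k a => simp [integral_const_mul, mom]

theorem IsMonicOPS.momentFunctional_mul_eq_zero {ρ : Measure ℝ} [IsFiniteMeasure ρ]
    {P : ℕ → ℝ[X]} (hP : IsMonicOPS ρ P) (hcs : CompactSupp ρ) (n : ℕ) :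
    ∀ g ∈ degreeLT ℝ n, momentFunctional (mom ρ) (P n * g) = 0 :=
  map_mul_eq_zero_of_orthogonal hP.1 hP.2.1 fun k hk => by
    rw [← hcs.integral_eval, ← hP.2.2 n k hk.ne']
    simp only [eval_mul]

theorem stmt17_general (μ ν : Measure ℝ) [IsProbabilityMeasure μ] [IsProbabilityMeasure ν]
    (hcsμ : CompactSupp μ) (hcsν : CompactSupp ν)
    (β : ℝ) (γ : ℝ)
    (hshift : JacobiShift β γ (mom ν) (mom μ))
    (Pμ Pν : ℕ → Polynomial ℝ) (hPμ : IsMonicOPS μ Pμ) (hPν : IsMonicOPS ν Pν) :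
    ∀ n : ℕ, 1 ≤ n →
      ∫ x, ((Pμ n).eval x) ^ 2 ∂μ = γ * ∫ x, ((Pν (n - 1)).eval x) ^ 2 ∂ν := by
  intro n hn
  obtain ⟨n, rfl⟩ : ∃ k, n = k + 1 := ⟨n - 1, by omega⟩
  simp only [← eval_pow, hcsμ.integral_eval, hcsν.integral_eval, Nat.add_sub_cancel]
  exact map_sq_eq_mul_map_sq_of_shift hshift.momentFunctional_X_sub_C_mul
    (by simpa [mom] using momentFunctional_X_pow (mom μ) 0)
    (hPμ.1 _) (hPμ.2.1 _) (hPμ.momentFunctional_mul_eq_zero hcsμ _)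
    (hPν.1 _) (hPν.2.1 _) (hPν.momentFunctional_mul_eq_zero hcsν _)

theorem stmt17 (μ ν : Measure ℝ) [IsProbabilityMeasure μ] [IsProbabilityMeasure ν]
    (hcsμ : CompactSupp μ) (hcsν : CompactSupp ν)
    (hinfμ : (msupport μ).Infinite) (hinfν : (msupport ν).Infinite)
    (β : ℝ) (γ : ℝ) (hγ : 0 < γ)
    (hshift : JacobiShift β γ (mom ν) (mom μ))
    (Pμ Pν : ℕ → Polynomial ℝ) (hPμ : IsMonicOPS μ Pμ) (hPν : IsMonicOPS ν Pν) :
    ∀ n : ℕ, 1 ≤ n →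
      ∫ x, ((Pμ n).eval x) ^ 2 ∂μ = γ * ∫ x, ((Pν (n - 1)).eval x) ^ 2 ∂ν :=
  stmt17_general μ ν hcsμ hcsν β γ hshift Pμ Pν hPμ hPν
end

section
/- Let μ and ν be compactly supported probability measures on ℝ, with μ of infinite support, mean 0 (∫ x dμ = 0) and variance 1 (∫ x² dμ = 1). Let p, q ∈ ℝ[x], not both zero, and suppose the operator Q[f] = p · L_ν[L_μ[f]] + q · L_μ[f] on ℝ[x] has a polynomial system of eigenfunctions (P_n)_{n≥0} that are orthogonal with respect to μ, i.e. ∫ P_n P_m dμ = 0 for all n ≠ m. Then μ = Φ_{0,1}[ν], i.e. the moments satisfy m^μ_n = Σ_{i,j≥0, i+j=n−2} m^ν_i m^μ_j for every n ≥ 1 (μ and ν are related by a Jacobi shift). -/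
open MeasureTheory Polynomial

/-- The operator `L_ρ` on polynomials, defined via the moment sequence `m` of `ρ`:
`L[x^n] = Σ_{k=0}^{n-1} m_{n-1-k} x^k`. -/
noncomputable def Lop (m : ℕ → ℝ) (f : Polynomial ℝ) : Polynomial ℝ :=
  f.sum fun n a => C a * ∑ k ∈ Finset.range n, C (m (n - 1 - k)) * X ^ k

noncomputable def chi (m : ℕ → ℝ) (f : Polynomial ℝ) : ℝ := f.sum fun n a => a * m n


lemma chi_add (m : ℕ → ℝ) (f g : Polynomial ℝ) : chi m (f + g) = chi m f + chi m g := by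
  unfold chi
  apply Polynomial.sum_add_index <;> intros <;> ring

lemma chi_monomial (m : ℕ → ℝ) (n : ℕ) (a : ℝ) : chi m (monomial n a) = a * m n := by
  unfold chi
  rw [Polynomial.sum_monomial_index]
  ring

lemma chi_C_mul (m : ℕ → ℝ) (c : ℝ) (f : Polynomial ℝ) : chi m (C c * f) = c * chi m f := by
  induction f using Polynomial.induction_on' with
  | add p q hp hq => rw [mul_add, chi_add, chi_add, hp, hq]; ring
  | monomial n a =>
      rw [Polynomial.C_mul_monomial, chi_monomial, chi_monomial]; ring

lemma Lop_add (m : ℕ → ℝ) (f g : Polynomial ℝ) : Lop m (f + g) = Lop m f + Lop m g := by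
  unfold Lop
  apply Polynomial.sum_add_index <;> intros <;> simp [add_mul]

lemma Lop_monomial (m : ℕ → ℝ) (n : ℕ) (a : ℝ) :
    Lop m (monomial n a) = C a * ∑ k ∈ Finset.range n, C (m (n - 1 - k)) * X ^ k := by
  unfold Lop
  rw [Polynomial.sum_monomial_index]
  simp

lemma Lop_C_mul (m : ℕ → ℝ) (c : ℝ) (f : Polynomial ℝ) : Lop m (C c * f) = C c * Lop m f := by
  induction f using Polynomial.induction_on' with
  | add p q hp hq => rw [mul_add, Lop_add, Lop_add, hp, hq, mul_add]
  | monomial n a => rw [Polynomial.C_mul_monomial, Lop_monomial, Lop_monomial, C_mul, mul_assoc]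

lemma Lop_C (m : ℕ → ℝ) (a : ℝ) : Lop m (C a) = 0 := by
  rw [← Polynomial.monomial_zero_left, Lop_monomial]
  simp

lemma Lop_one (m : ℕ → ℝ) : Lop m 1 = 0 := by
  rw [← Polynomial.C_1, Lop_C]

lemma Lop_X (m : ℕ → ℝ) : Lop m X = C (m 0) := by
  rw [← Polynomial.monomial_one_one_eq_X, Lop_monomial]
  simp

lemma Lop_X_mul (m : ℕ → ℝ) (f : Polynomial ℝ) :
    Lop m (X * f) = X * Lop m f + C (chi m f) := by
  induction f using Polynomial.induction_on' with
  | add p q hp hq =>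
      rw [mul_add, Lop_add, hp, hq, Lop_add, chi_add, C_add]; ring
  | monomial n a =>
      rw [X_mul_monomial, Lop_monomial, Lop_monomial, chi_monomial, Finset.sum_range_succ']
      have h0 : n + 1 - 1 - 0 = n := by omega
      have hs : ∀ k : ℕ, n + 1 - 1 - (k + 1) = n - 1 - k := by omega
      simp only [h0, hs, mul_add, Finset.mul_sum]
      congr 1
      · refine Finset.sum_congr rfl fun k _ => ?_
        ring
      · rw [C_mul]; ring


lemma Lop_coeff (m : ℕ → ℝ) (f : Polynomial ℝ) (j : ℕ) :
    (Lop m f).coeff j = f.sum fun n a => if j < n then a * m (n - 1 - j) else 0 := by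
  unfold Lop
  rw [Polynomial.sum_def, Polynomial.sum_def, Polynomial.finset_sum_coeff]
  refine Finset.sum_congr rfl fun n _ => ?_
  rw [Polynomial.coeff_C_mul, Polynomial.finset_sum_coeff]
  have : ∀ k ∈ Finset.range n, (C (m (n - 1 - k)) * X ^ k).coeff j
      = if j = k then m (n - 1 - k) else 0 := by
    intro k _
    rw [Polynomial.coeff_C_mul, Polynomial.coeff_X_pow]
    by_cases h : j = k <;> simp [h]
  rw [Finset.sum_congr rfl this, Finset.sum_ite_eq (Finset.range n) j
      (fun k => m (n - 1 - k))]
  simp only [Finset.mem_range]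
  by_cases h : j < n <;> simp [h]

lemma Lop_coeff_range (m : ℕ → ℝ) (f : Polynomial ℝ) (j N : ℕ) (hN : f.natDegree < N) :
    (Lop m f).coeff j = ∑ n ∈ Finset.range N, if j < n then f.coeff n * m (n - 1 - j) else 0 := by
  rw [Lop_coeff]
  exact Polynomial.sum_over_range' f (by intro n; simp) N hN

lemma natDegree_Lop_le (m : ℕ → ℝ) (f : Polynomial ℝ) (d : ℕ) (h : f.natDegree ≤ d + 1) :
    (Lop m f).natDegree ≤ d := by
  rw [Polynomial.natDegree_le_iff_coeff_eq_zero]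
  intro j hj
  rw [Lop_coeff, Polynomial.sum_def]
  apply Finset.sum_eq_zero
  intro n hn
  have : n ≤ f.natDegree := Polynomial.le_natDegree_of_mem_supp n hn
  have : ¬ (j < n) := by omega
  simp [this]

lemma Lop_coeff_top (m : ℕ → ℝ) (f : Polynomial ℝ) (d : ℕ) (hd : f.natDegree ≤ d + 1) :
    (Lop m f).coeff d = f.coeff (d + 1) * m 0 := by
  rw [Lop_coeff_range m f d (d + 2) (by omega)]
  rw [Finset.sum_eq_single (d + 1)]
  · simp
  · intro n hn hne
    have : ¬ (d < n) ∨ f.coeff n = 0 := by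
      rcases Nat.lt_or_ge n (d+1) with h | h
      · left; omega
      · right
        exact Polynomial.coeff_eq_zero_of_natDegree_lt (by omega)
    rcases this with h | h <;> simp [h]
  · intro h; exact absurd (Finset.mem_range.mpr (by omega)) h

lemma Lop_monic (m : ℕ → ℝ) (hm : m 0 = 1) (f : Polynomial ℝ) (d : ℕ)
    (hf : f.Monic) (hd : f.natDegree = d + 1) :
    (Lop m f).Monic ∧ (Lop m f).natDegree = d := by
  have hc : (Lop m f).coeff d = 1 := by
    rw [Lop_coeff_top m f d (le_of_eq hd), ← hd, hf.coeff_natDegree, hm, one_mul]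
  have hle : (Lop m f).natDegree ≤ d := natDegree_Lop_le m f d (le_of_eq hd)
  have hge : d ≤ (Lop m f).natDegree :=
    Polynomial.le_natDegree_of_ne_zero (by rw [hc]; norm_num)
  have hdeg : (Lop m f).natDegree = d := le_antisymm hle hge
  constructor
  · unfold Polynomial.Monic Polynomial.leadingCoeff
    rw [hdeg, hc]
  · exact hdeg

/-- walk coefficients: `co b g n j` = weighted count of length-`n` paths from level `j` to 0. -/
noncomputable def co (b g : ℕ → ℝ) : ℕ → ℕ → ℝ
  | 0, 0 => 1
  | 0, _+1 => 0
  | n+1, 0 => co b g n 1 + b 0 * co b g n 0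
  | n+1, j+1 => co b g n (j+2) + b (j+1) * co b g n (j+1) + g (j+1) * co b g n j

lemma keyF (b g : ℕ → ℝ) (hg1 : g 1 = 1) :
    ∀ n j, co b g n (j+1) =
      ∑ i ∈ Finset.range n,
        co (fun i => b (i+1)) (fun i => g (i+1)) i j * co b g (n-1-i) 0 := by
  intro n
  induction n with
  | zero => intro j; simp [co]
  | succ n ih =>
    intro j
    match j with
    | 0 =>
      show co b g n 2 + b 1 * co b g n 1 + g 1 * co b g n 0 = _
      rw [hg1, one_mul, ih 1, ih 0, Finset.sum_range_succ', Finset.mul_sum,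
        ← Finset.sum_add_distrib]
      congr 1
      · refine Finset.sum_congr rfl fun i _ => ?_
        have h1 : n - 1 - i = n - (i+1) := by omega
        have h2 : co (fun i => b (i+1)) (fun i => g (i+1)) (i+1) 0
            = co (fun i => b (i+1)) (fun i => g (i+1)) i 1
              + b 1 * co (fun i => b (i+1)) (fun i => g (i+1)) i 0 := rfl
        have h3 : n + 1 - 1 - (i + 1) = n - (i+1) := by omega
        rw [h2, h1, h3]; ring
      · show co b g n 0 = co (fun i => b (i+1)) (fun i => g (i+1)) 0 0 * co b g (n - 0) 0
        simp [co]
    | j+1 =>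
      show co b g n (j+3) + b (j+2) * co b g n (j+2) + g (j+2) * co b g n (j+1) = _
      rw [ih (j+2), ih (j+1), ih j, Finset.sum_range_succ', Finset.mul_sum, Finset.mul_sum,
        ← Finset.sum_add_distrib, ← Finset.sum_add_distrib]
      have hz : co (fun i => b (i+1)) (fun i => g (i+1)) 0 (j+1) * co b g (n + 1 - 1 - 0) 0 = 0 := by
        simp [co]
      rw [hz, add_zero]
      refine Finset.sum_congr rfl fun i _ => ?_
      have h1 : n - 1 - i = n - (i+1) := by omega
      have h2 : co (fun i => b (i+1)) (fun i => g (i+1)) (i+1) (j+1)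
          = co (fun i => b (i+1)) (fun i => g (i+1)) i (j+2)
            + b (j+2) * co (fun i => b (i+1)) (fun i => g (i+1)) i (j+1)
            + g (j+2) * co (fun i => b (i+1)) (fun i => g (i+1)) i j := rfl
      have h3 : n + 1 - 1 - (i + 1) = n - (i+1) := by omega
      rw [h2, h1, h3]; ring

lemma conv_co (b g : ℕ → ℝ) (hb0 : b 0 = 0) (hg1 : g 1 = 1) (n : ℕ) (hn : 1 ≤ n) :
    co b g n 0 = ∑ i ∈ Finset.range (n-1),
      co (fun i => b (i+1)) (fun i => g (i+1)) i 0 * co b g (n-2-i) 0 := by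
  obtain ⟨k, rfl⟩ : ∃ k, n = k + 1 := ⟨n - 1, by omega⟩
  show co b g k 1 + b 0 * co b g k 0 = _
  rw [hb0, zero_mul, add_zero, keyF b g hg1 k 0]
  refine Finset.sum_congr (by simp) fun i _ => ?_
  have : k - 1 - i = k + 1 - 2 - i := by omega
  rw [this]

lemma chi_one (m : ℕ → ℝ) : chi m 1 = m 0 := by
  have : (1 : Polynomial ℝ) = monomial 0 1 := by simp
  rw [this, chi_monomial, one_mul]

lemma Gmain (c b g : ℕ → ℝ) (R : ℕ → Polynomial ℝ) (hc0 : c 0 = 1)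
    (hR0 : R 0 = 1)
    (hrec0 : X * R 0 = R 1 + C (b 0) * R 0)
    (hchi : ∀ n, chi c (R (n+1)) = 0)
    (hrec : ∀ n, X * R (n+1) = R (n+2) + C (b (n+1)) * R (n+1) + C (g (n+1)) * R n) :
    Lop c (R 0) = 0 ∧ Lop c (R 1) = 1 ∧
    ∀ n, X * Lop c (R (n+1))
      = Lop c (R (n+2)) + C (b (n+1)) * Lop c (R (n+1)) + C (g (n+1)) * Lop c (R n) := by
  have hS0 : Lop c (R 0) = 0 := by rw [hR0, Lop_one]
  have hS1 : Lop c (R 1) = 1 := by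
    have := congrArg (Lop c) hrec0
    rw [Lop_X_mul, hS0, Lop_add, Lop_C_mul, hS0, hR0, chi_one, hc0] at this
    simpa using this.symm
  refine ⟨hS0, hS1, fun n => ?_⟩
  have := congrArg (Lop c) (hrec n)
  rw [Lop_X_mul, hchi n, Lop_add, Lop_add, Lop_C_mul, Lop_C_mul] at this
  simpa using this

lemma monic_seq (b g : ℕ → ℝ) (S : ℕ → Polynomial ℝ) (hS0 : S 0 = 0) (hS1 : S 1 = 1)
    (hrec : ∀ n, X * S (n+1) = S (n+2) + C (b (n+1)) * S (n+1) + C (g (n+1)) * S n) :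
    ∀ n, (S (n+1)).Monic ∧ (S (n+1)).natDegree = n := by
  have key : ∀ n, ((S (n+1)).Monic ∧ (S (n+1)).natDegree = n)
      ∧ ((S (n+2)).Monic ∧ (S (n+2)).natDegree = n+1) := by
    intro n
    induction n with
    | zero =>
      have h1 : (S 1).Monic ∧ (S 1).natDegree = 0 := by rw [hS1]; exact ⟨monic_one, natDegree_one⟩
      have h2 : S 2 = X - C (b 1) := by
        have h' : X * S 1 = S 2 + C (b 1) * S 1 + C (g 1) * S 0 := hrec 0
        rw [hS0, hS1, mul_one, mul_zero, add_zero] at h'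
        rw [h']; ring
      exact ⟨h1, by rw [h2]; exact ⟨monic_X_sub_C _, natDegree_X_sub_C _⟩⟩
    | succ n ih =>
      refine ⟨ih.2, ?_⟩
      have h' : X * S (n+2) = S (n+3) + C (b (n+2)) * S (n+2) + C (g (n+2)) * S (n+1) :=
        hrec (n+1)
      have hS3 : S (n+3) = X * S (n+2)
          + (-(C (b (n+2)) * S (n+2)) - C (g (n+2)) * S (n+1)) := by
        rw [h']; ring
      have hm2 : (S (n+2)).Monic := ih.2.1
      have hXm : (X * S (n+2)).Monic := monic_X.mul hm2
      have hXd : (X * S (n+2)).natDegree = n + 2 := by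
        rw [monic_X.natDegree_mul hm2, ih.2.2, natDegree_X]; omega
      have hdegX : (X * S (n+2)).degree = ((n+2 : ℕ) : WithBot ℕ) := by
        rw [Polynomial.degree_eq_natDegree hXm.ne_zero, hXd]
      set r : Polynomial ℝ := -(C (b (n+2)) * S (n+2)) - C (g (n+2)) * S (n+1) with hr
      have hrd : r.natDegree ≤ n + 1 := by
        refine le_trans (natDegree_sub_le _ _) ?_
        apply max_le
        · rw [natDegree_neg]
          exact le_trans (natDegree_C_mul_le _ _) (by rw [ih.2.2])
        · exact le_trans (natDegree_C_mul_le _ _) (by rw [ih.1.2]; omega)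
      have hrdeg : r.degree < (X * S (n+2)).degree := by
        rw [hdegX]
        calc r.degree ≤ (r.natDegree : WithBot ℕ) := degree_le_natDegree
        _ ≤ ((n+1 : ℕ) : WithBot ℕ) := by exact_mod_cast hrd
        _ < ((n+2 : ℕ) : WithBot ℕ) := by exact_mod_cast (by omega : n+1 < n+2)
      constructor
      · rw [hS3]; exact hXm.add_of_left hrdeg
      · rw [hS3]
        have := Polynomial.degree_add_eq_left_of_degree_lt hrdeg
        rw [hdegX] at this
        exact natDegree_eq_of_degree_eq_some this
  intro n; exact (key n).1



noncomputable def phi (μ : Measure ℝ) (f : Polynomial ℝ) : ℝ := ∫ x, f.eval x ∂μ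

lemma integrable_eval (μ : Measure ℝ) [IsProbabilityMeasure μ] (hcs : CompactSupp μ)
    (f : Polynomial ℝ) : Integrable (fun x => f.eval x) μ := by
  obtain ⟨K, hK, hKc⟩ := hcs
  have hcont : Continuous fun x => f.eval x := f.continuous_aeval
  obtain ⟨C, hC⟩ := hK.exists_bound_of_continuousOn hcont.continuousOn
  refine Integrable.mono' (integrable_const C) hcont.aestronglyMeasurable ?_
  have : {x | ¬ ‖f.eval x‖ ≤ C} ⊆ Kᶜ := by
    intro x hx
    simp only [Set.mem_setOf_eq] at hx
    intro hxK
    exact hx (hC x hxK)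
  exact measure_mono_null this hKc

lemma phi_add (μ : Measure ℝ) [IsProbabilityMeasure μ] (hcs : CompactSupp μ)
    (f g : Polynomial ℝ) : phi μ (f + g) = phi μ f + phi μ g := by
  unfold phi
  simp only [Polynomial.eval_add]
  exact integral_add (integrable_eval μ hcs f) (integrable_eval μ hcs g)

lemma phi_C_mul (μ : Measure ℝ) (c : ℝ) (f : Polynomial ℝ) :
    phi μ (C c * f) = c * phi μ f := by
  unfold phi
  simp only [Polynomial.eval_mul, Polynomial.eval_C]
  exact integral_const_mul c _

lemma phi_C (μ : Measure ℝ) [IsProbabilityMeasure μ] (a : ℝ) : phi μ (C a) = a := by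
  unfold phi; simp

lemma phi_one (μ : Measure ℝ) [IsProbabilityMeasure μ] : phi μ 1 = 1 := by
  unfold phi; simp

lemma phi_sub (μ : Measure ℝ) [IsProbabilityMeasure μ] (hcs : CompactSupp μ)
    (f g : Polynomial ℝ) : phi μ (f - g) = phi μ f - phi μ g := by
  unfold phi
  simp only [Polynomial.eval_sub]
  exact integral_sub (integrable_eval μ hcs f) (integrable_eval μ hcs g)

/-- positive-definiteness from infinite support -/
lemma phi_posdef (μ : Measure ℝ) [IsProbabilityMeasure μ] (hcs : CompactSupp μ)
    (hinf : (msupport μ).Infinite) (f : Polynomial ℝ) (hf : f ≠ 0) :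
    0 < phi μ (f * f) := by
  have heval : ∀ x, (f * f).eval x = (f.eval x) ^ 2 := by intro x; simp [sq]
  have hnonneg : 0 ≤ phi μ (f * f) := by
    unfold phi
    apply integral_nonneg
    intro x
    simp only [heval]; positivity
  rcases lt_or_eq_of_le hnonneg with h | h
  · exact h
  exfalso
  have hint : Integrable (fun x => (f * f).eval x) μ := integrable_eval μ hcs (f * f)
  have hzero : (fun x => (f * f).eval x) =ᵐ[μ] 0 := by
    rw [← integral_eq_zero_iff_of_nonneg _ hint]
    · exact h.symm
    · intro x
      simp only [Pi.zero_apply, heval]; positivity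
  have hmeas : μ {x | f.eval x ≠ 0} = 0 := by
    have hsub : {x | f.eval x ≠ 0} ⊆ {x | (f * f).eval x ≠ 0} := by
      intro x hx
      simp only [Set.mem_setOf_eq, heval] at *
      exact pow_ne_zero 2 hx
    refine measure_mono_null hsub ?_
    have := hzero
    rw [Filter.EventuallyEq, ae_iff] at this
    simpa using this
  have hroot : msupport μ ⊆ {x | f.IsRoot x} := by
    intro x hx
    by_contra hfx
    have hopen : IsOpen {y | f.eval y ≠ 0} :=
      isOpen_ne.preimage f.continuous_aeval
    have hmem : {y | f.eval y ≠ 0} ∈ nhds x := hopen.mem_nhds hfx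
    exact hx _ hmem hmeas
  exact hf (Polynomial.eq_zero_of_infinite_isRoot f (hinf.mono hroot))

lemma chi_sub (m : ℕ → ℝ) (f g : Polynomial ℝ) : chi m (f - g) = chi m f - chi m g := by
  have h : f - g = f + C (-1) * g := by
    rw [show (C (-1) : Polynomial ℝ) = -1 by simp]; ring
  rw [h, chi_add, chi_C_mul]; ring

lemma Lop_sub (m : ℕ → ℝ) (f g : Polynomial ℝ) : Lop m (f - g) = Lop m f - Lop m g := by
  have h : f - g = f + C (-1) * g := by
    rw [show (C (-1) : Polynomial ℝ) = -1 by simp]; ring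
  rw [h, Lop_add, Lop_C_mul]
  have : (C (-1) : Polynomial ℝ) = -1 := by simp
  rw [this]; ring

lemma chi_X_pow (m : ℕ → ℝ) (n : ℕ) : chi m (X ^ n) = m n := by
  rw [Polynomial.X_pow_eq_monomial, chi_monomial, one_mul]

lemma Lop_coeff_zero (c : ℕ → ℝ) (f : Polynomial ℝ) (N : ℕ) (h : f.natDegree < N + 1) :
    (Lop c f).coeff 0 = ∑ k ∈ Finset.range N, f.coeff (k+1) * c k := by
  rw [Lop_coeff_range c f 0 (N+1) h, Finset.sum_range_succ']
  have h0 : (if (0:ℕ) < 0 then f.coeff 0 * c (0 - 1 - 0) else 0) = 0 := by simp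
  rw [h0, add_zero]
  refine Finset.sum_congr rfl fun k _ => ?_
  have h1 : (0:ℕ) < k + 1 := Nat.succ_pos k
  have h2 : k + 1 - 1 - 0 = k := by omega
  rw [if_pos h1, h2]
section OPS
variable (μ : Measure ℝ) [IsProbabilityMeasure μ]

lemma phi_eq_chi (hcs : CompactSupp μ) (f : Polynomial ℝ) : phi μ f = chi (mom μ) f := by
  induction f using Polynomial.induction_on' with
  | add p q hp hq => rw [phi_add μ hcs, chi_add, hp, hq]
  | monomial n a =>
    rw [chi_monomial]
    unfold phi mom
    simp only [Polynomial.eval_monomial]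
    exact integral_const_mul a _

lemma OPSrec (hcs : CompactSupp μ) (hinf : (msupport μ).Infinite)
    (hmean : ∫ x, x ∂μ = 0) (hvar : ∫ x, x ^ 2 ∂μ = 1)
    (P : ℕ → Polynomial ℝ)
    (hdeg : ∀ n, (P n).degree = (n : WithBot ℕ))
    (horth : ∀ n m : ℕ, n ≠ m → ∫ x, (P n).eval x * (P m).eval x ∂μ = 0) :
    ∃ (Q : ℕ → Polynomial ℝ) (β γ : ℕ → ℝ),
      (∀ n, (Q n).Monic) ∧ (∀ n, (Q n).natDegree = n) ∧
      (∀ n, ∃ c : ℝ, c ≠ 0 ∧ P n = C c * Q n) ∧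
      Q 0 = 1 ∧ Q 1 = X ∧ β 0 = 0 ∧ γ 1 = 1 ∧
      (∀ n, 0 < γ (n+1)) ∧
      (X * Q 0 = Q 1 + C (β 0) * Q 0) ∧
      (∀ n, X * Q (n+1) = Q (n+2) + C (β (n+1)) * Q (n+1) + C (γ (n+1)) * Q n) ∧
      (∀ n, chi (mom μ) (Q (n+1)) = 0) ∧
      (∀ n, mom μ n = co β γ n 0) := by
  classical
  set Q : ℕ → Polynomial ℝ := fun n => C ((P n).leadingCoeff)⁻¹ * P n with hQdef
  have hPne : ∀ n, P n ≠ 0 := by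
    intro n h
    have := hdeg n
    rw [h, Polynomial.degree_zero] at this
    exact absurd this.symm (by simp)
  have hlc : ∀ n, (P n).leadingCoeff ≠ 0 := fun n => Polynomial.leadingCoeff_ne_zero.mpr (hPne n)
  have hQmonic : ∀ n, (Q n).Monic := by
    intro n
    unfold Q
    unfold Polynomial.Monic
    rw [Polynomial.leadingCoeff_mul, Polynomial.leadingCoeff_C]
    exact inv_mul_cancel₀ (hlc n)
  have hQdeg : ∀ n, (Q n).natDegree = n := by
    intro n
    unfold Q
    rw [Polynomial.natDegree_C_mul (inv_ne_zero (hlc n))]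
    exact Polynomial.natDegree_eq_of_degree_eq_some (hdeg n)
  have hPQ : ∀ n, P n = C ((P n).leadingCoeff) * Q n := by
    intro n
    unfold Q
    rw [← mul_assoc, ← C_mul, mul_inv_cancel₀ (hlc n), C_1, one_mul]
  have hQ0 : Q 0 = 1 := ((hQmonic 0).natDegree_eq_zero).mp (hQdeg 0)
  have horthQ : ∀ n m : ℕ, n ≠ m → phi μ (Q n * Q m) = 0 := by
    intro n m hnm
    have hprod : Q n * Q m
        = C ((P n).leadingCoeff⁻¹ * (P m).leadingCoeff⁻¹) * (P n * P m) := by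
      unfold Q; rw [C_mul]; ring
    rw [hprod, phi_C_mul]
    have : phi μ (P n * P m) = 0 := by
      unfold phi
      simp only [Polynomial.eval_mul]
      exact horth n m hnm
    rw [this, mul_zero]
  have nz : ∀ n, 0 < phi μ (Q n * Q n) :=
    fun n => phi_posdef μ hcs hinf (Q n) (hQmonic n).ne_zero
  set β : ℕ → ℝ := fun n => phi μ (X * Q n * Q n) / phi μ (Q n * Q n) with hβdef
  set γ : ℕ → ℝ := fun n =>
    match n with
    | 0 => 0
    | n+1 => phi μ (Q (n+1) * Q (n+1)) / phi μ (Q n * Q n) with hγdef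
  have hγpos : ∀ n, 0 < γ (n+1) := fun n => div_pos (nz (n+1)) (nz n)
  -- orthogonality of Q n against lower degrees
  have L1 : ∀ (n : ℕ) (f : Polynomial ℝ), f.degree < (n : WithBot ℕ) → phi μ (Q n * f) = 0 := by
    suffices H : ∀ (d n : ℕ) (f : Polynomial ℝ), f.natDegree ≤ d →
        f.degree < (n : WithBot ℕ) → phi μ (Q n * f) = 0 by
      exact fun n f hf => H f.natDegree n f le_rfl hf
    intro d
    induction d with
    | zero =>
      intro n f hfd hfdeg
      have hf : f = C (f.coeff 0) := Polynomial.eq_C_of_natDegree_le_zero hfd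
      by_cases hc : f.coeff 0 = 0
      · rw [hf, hc]
        simp [phi]
      · have hn : 0 < n := by
          have hfd0 : f.degree = (0 : ℕ) := by rw [hf]; exact Polynomial.degree_C hc
          rw [hfd0] at hfdeg
          exact_mod_cast hfdeg
        have hexp : Q n * f = C (f.coeff 0) * (Q n * Q 0) := by
          rw [hQ0, mul_one]
          conv_lhs => rw [hf]
          ring
        rw [hexp, phi_C_mul, horthQ n 0 (by omega), mul_zero]
    | succ d ih =>
      intro n f hfd hfdeg
      by_cases hf0 : f = 0
      · rw [hf0, mul_zero]
        simp [phi]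
      set e := f.natDegree with he
      have hdegf : f.degree = (e : WithBot ℕ) := Polynomial.degree_eq_natDegree hf0
      have hen : e < n := by
        rw [hdegf] at hfdeg
        exact_mod_cast hfdeg
      set r := f - C f.leadingCoeff * Q e with hr
      have hQe0 : (C f.leadingCoeff * Q e) ≠ 0 :=
        mul_ne_zero (by simpa using Polynomial.leadingCoeff_ne_zero.mpr hf0) (hQmonic e).ne_zero
      have hdCQ : (C f.leadingCoeff * Q e).degree = f.degree := by
        rw [Polynomial.degree_C_mul (Polynomial.leadingCoeff_ne_zero.mpr hf0),
          Polynomial.degree_eq_natDegree (hQmonic e).ne_zero, hQdeg e, hdegf]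
      have hdr : r.degree < f.degree := by
        have := Polynomial.degree_sub_lt hdCQ.symm hf0 ?_
        · -- degree (f - C lc * Q e) < degree f
          have h2 : f - C f.leadingCoeff * Q e = r := rfl
          rw [h2] at this
          exact this
        · rw [Polynomial.leadingCoeff_mul, Polynomial.leadingCoeff_C, (hQmonic e).leadingCoeff,
            mul_one]
      have hrnd : r.natDegree ≤ d := by
        by_cases h0 : r = 0
        · rw [h0]; simp
        · have := Polynomial.natDegree_lt_natDegree h0 hdr
          omega
      have hrdeg : r.degree < (n : WithBot ℕ) := lt_trans hdr hfdeg
      have hexp : Q n * f = C f.leadingCoeff * (Q n * Q e) + Q n * r := by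
        rw [hr]; ring
      rw [hexp, phi_add μ hcs, phi_C_mul, horthQ n e (by omega), mul_zero, zero_add]
      exact ih n r hrnd hrdeg
  have hphiX : phi μ X = 0 := by
    unfold phi; simpa using hmean
  have hQ1 : Q 1 = X := by
    have h1 : Q 1 = X + C ((Q 1).coeff 0) := (hQmonic 1).eq_X_add_C (hQdeg 1)
    have h2 : phi μ (Q 1) = 0 := by
      have := horthQ 1 0 one_ne_zero
      rwa [hQ0, mul_one] at this
    have h3 : phi μ (Q 1) = phi μ X + (Q 1).coeff 0 := by
      conv_lhs => rw [h1]
      rw [phi_add μ hcs, phi_C]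
    rw [h3, hphiX, zero_add] at h2
    rw [h1, h2, C_0, add_zero]
  have hβ0 : β 0 = 0 := by
    have h1 : X * Q 0 * Q 0 = X := by rw [hQ0, mul_one, mul_one]
    have h2 : phi μ (Q 0 * Q 0) = 1 := by rw [hQ0, mul_one, phi_one]
    show phi μ (X * Q 0 * Q 0) / phi μ (Q 0 * Q 0) = 0
    rw [h1, h2, hphiX]; norm_num
  have hrec0 : X * Q 0 = Q 1 + C (β 0) * Q 0 := by
    rw [hβ0, hQ0, hQ1, C_0, zero_mul, add_zero, mul_one]
  have hγ1 : γ 1 = 1 := by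
    have h1 : phi μ (Q 1 * Q 1) = 1 := by
      rw [hQ1]
      unfold phi
      have : ∀ x : ℝ, (X * X : Polynomial ℝ).eval x = x ^ 2 := by intro x; simp [sq]
      rw [show (fun x => (X*X : Polynomial ℝ).eval x) = fun x : ℝ => x ^ 2 from funext this]
      exact hvar
    have h2 : phi μ (Q 0 * Q 0) = 1 := by rw [hQ0, mul_one, phi_one]
    show phi μ (Q 1 * Q 1) / phi μ (Q 0 * Q 0) = 1
    rw [h1, h2]; norm_num
  -- the three-term recurrence
  have hrec : ∀ n, X * Q (n+1) = Q (n+2) + C (β (n+1)) * Q (n+1) + C (γ (n+1)) * Q n := by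
    intro n
    set R := X * Q (n+1) - Q (n+2) - C (β (n+1)) * Q (n+1) - C (γ (n+1)) * Q n with hRdef
    have hXQmon : (X * Q (n+1)).Monic := monic_X.mul (hQmonic (n+1))
    have hXQnd : (X * Q (n+1)).natDegree = n + 2 := by
      rw [monic_X.natDegree_mul (hQmonic (n+1)), natDegree_X, hQdeg]
      omega
    have hXQdeg : (X * Q (n+1)).degree = ((n+2 : ℕ) : WithBot ℕ) := by
      rw [Polynomial.degree_eq_natDegree hXQmon.ne_zero, hXQnd]
    have hQ2deg : (Q (n+2)).degree = ((n+2 : ℕ) : WithBot ℕ) := by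
      rw [Polynomial.degree_eq_natDegree (hQmonic (n+2)).ne_zero, hQdeg]
    have hD : (X * Q (n+1) - Q (n+2)).natDegree ≤ n + 1 := by
      have hlt : (X * Q (n+1) - Q (n+2)).degree < ((n+2 : ℕ) : WithBot ℕ) := by
        have := Polynomial.degree_sub_lt (hXQdeg.trans hQ2deg.symm) hXQmon.ne_zero
          (by rw [hXQmon.leadingCoeff, (hQmonic (n+2)).leadingCoeff])
        rwa [hXQdeg] at this
      by_cases h0 : X * Q (n+1) - Q (n+2) = 0
      · rw [h0]; simp
      · rw [Polynomial.degree_eq_natDegree h0] at hlt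
        have : (X * Q (n+1) - Q (n+2)).natDegree < n + 2 := by exact_mod_cast hlt
        omega
    have hRnd : R.natDegree ≤ n + 1 := by
      rw [hRdef]
      have e1 : X * Q (n+1) - Q (n+2) - C (β (n+1)) * Q (n+1) - C (γ (n+1)) * Q n
          = (X * Q (n+1) - Q (n+2)) - C (β (n+1)) * Q (n+1) - C (γ (n+1)) * Q n := by ring
      rw [e1]
      refine le_trans (Polynomial.natDegree_sub_le _ _) (max_le (le_trans (Polynomial.natDegree_sub_le _ _) (max_le hD ?_)) ?_)
      · exact le_trans (Polynomial.natDegree_C_mul_le _ _) (by rw [hQdeg])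
      · exact le_trans (Polynomial.natDegree_C_mul_le _ _) (by rw [hQdeg]; omega)
    have orthR : ∀ k, k ≤ n + 1 → phi μ (R * Q k) = 0 := by
      intro k hk
      have hexp : R * Q k = Q (n+1) * (X * Q k) - Q (n+2) * Q k
          - C (β (n+1)) * (Q (n+1) * Q k) - C (γ (n+1)) * (Q n * Q k) := by
        rw [hRdef]; ring
      rw [hexp, phi_sub μ hcs, phi_sub μ hcs, phi_sub μ hcs, phi_C_mul, phi_C_mul]
      have t2 : phi μ (Q (n+2) * Q k) = 0 := horthQ _ _ (by omega)
      rcases Nat.lt_trichotomy k n with hkn | hkeq | hkn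
      · -- k < n
        have t1 : phi μ (Q (n+1) * (X * Q k)) = 0 := by
          apply L1
          have hnd : (X * Q k).natDegree = k + 1 := by
            rw [monic_X.natDegree_mul (hQmonic k), natDegree_X, hQdeg]
            omega
          have : (X * Q k).degree = ((k+1 : ℕ) : WithBot ℕ) := by
            rw [Polynomial.degree_eq_natDegree (monic_X.mul (hQmonic k)).ne_zero, hnd]
          rw [this]
          exact_mod_cast (by omega : k + 1 < n + 1)
        have t3 : phi μ (Q (n+1) * Q k) = 0 := horthQ _ _ (by omega)
        have t4 : phi μ (Q n * Q k) = 0 := horthQ _ _ (by omega)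
        rw [t1, t2, t3, t4]; ring
      · -- k = n
        have hkeq' : n = k := hkeq.symm
        subst hkeq' 
        have t3 : phi μ (Q (n+1) * Q n) = 0 := horthQ _ _ (by omega)
        set s := X * Q n - Q (n+1) with hs
        have hsd : s.degree < ((n+1 : ℕ) : WithBot ℕ) := by
          have hXQn : (X * Q n).Monic := monic_X.mul (hQmonic n)
          have hnd' : (X * Q n).natDegree = n + 1 := by
            rw [monic_X.natDegree_mul (hQmonic n), natDegree_X, hQdeg]
            omega
          have hXQnd' : (X * Q n).degree = ((n+1 : ℕ) : WithBot ℕ) := by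
            rw [Polynomial.degree_eq_natDegree hXQn.ne_zero, hnd']
          have hQ1deg : (Q (n+1)).degree = ((n+1 : ℕ) : WithBot ℕ) := by
            rw [Polynomial.degree_eq_natDegree (hQmonic (n+1)).ne_zero, hQdeg]
          have := Polynomial.degree_sub_lt (hXQnd'.trans hQ1deg.symm) hXQn.ne_zero
            (by rw [hXQn.leadingCoeff, (hQmonic (n+1)).leadingCoeff])
          rwa [hXQnd'] at this
        have t1 : phi μ (Q (n+1) * (X * Q n))
            = phi μ (Q (n+1) * Q (n+1)) + phi μ (Q (n+1) * s) := by
          have : Q (n+1) * (X * Q n) = Q (n+1) * Q (n+1) + Q (n+1) * s := by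
            rw [hs]; ring
          rw [this, phi_add μ hcs]
        have t1s : phi μ (Q (n+1) * s) = 0 := L1 (n+1) s hsd
        have t4 : phi μ (Q n * Q n) ≠ 0 := ne_of_gt (nz n)
        rw [t1, t1s, t2, t3, add_zero]
        have hγval : γ (n+1) = phi μ (Q (n+1) * Q (n+1)) / phi μ (Q n * Q n) := rfl
        rw [hγval, div_mul_cancel₀ _ t4]
        ring
      · -- k = n+1 (since k ≤ n+1 and k > n)
        have hk1 : k = n + 1 := by omega
        subst hk1
        have t1 : phi μ (Q (n+1) * (X * Q (n+1))) = β (n+1) * phi μ (Q (n+1) * Q (n+1)) := by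
          have hβval : β (n+1) = phi μ (X * Q (n+1) * Q (n+1)) / phi μ (Q (n+1) * Q (n+1)) := rfl
          rw [hβval, div_mul_cancel₀ _ (ne_of_gt (nz (n+1)))]
          congr 1
          ring
        have t4 : phi μ (Q n * Q (n+1)) = 0 := horthQ _ _ (by omega)
        rw [t1, t2, t4]; ring
    have hR0 : R = 0 := by
      by_contra hR0
      set dd := R.natDegree with hdd
      have hlcR : R.leadingCoeff ≠ 0 := Polynomial.leadingCoeff_ne_zero.mpr hR0
      set r := R - C R.leadingCoeff * Q dd with hrr
      have hdCQ : (C R.leadingCoeff * Q dd).degree = R.degree := by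
        rw [Polynomial.degree_C_mul hlcR,
          Polynomial.degree_eq_natDegree (hQmonic dd).ne_zero, hQdeg,
          Polynomial.degree_eq_natDegree hR0]
      have hdr : r.degree < R.degree := by
        have := Polynomial.degree_sub_lt hdCQ.symm hR0
          (by rw [Polynomial.leadingCoeff_mul, Polynomial.leadingCoeff_C,
            (hQmonic dd).leadingCoeff, mul_one])
        exact this
      have hrdeg : r.degree < (dd : WithBot ℕ) := by
        rw [Polynomial.degree_eq_natDegree hR0] at hdr
        exact hdr
      have hexp : R * Q dd = C R.leadingCoeff * (Q dd * Q dd) + Q dd * r := by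
        rw [hrr]; ring
      have := orthR dd (hRnd)
      rw [hexp, phi_add μ hcs, phi_C_mul, L1 dd r hrdeg, add_zero] at this
      exact hlcR (by
        have := mul_eq_zero.mp this
        rcases this with h | h
        · exact h
        · exact absurd h (ne_of_gt (nz dd)))
    have : X * Q (n+1) - (Q (n+2) + C (β (n+1)) * Q (n+1) + C (γ (n+1)) * Q n) = R := by
      rw [hRdef]; ring
    have h0 : X * Q (n+1) - (Q (n+2) + C (β (n+1)) * Q (n+1) + C (γ (n+1)) * Q n) = 0 := by
      rw [this, hR0]
    exact sub_eq_zero.mp h0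
  -- chi facts
  have hchiQ : ∀ n, chi (mom μ) (Q (n+1)) = 0 := by
    intro n
    rw [← phi_eq_chi μ hcs]
    have := horthQ (n+1) 0 (by omega)
    rwa [hQ0, mul_one] at this
  -- moment bridge
  have W : ∀ (n j : ℕ), phi μ (X ^ n * Q j) = co β γ n j := by
    intro n
    induction n with
    | zero =>
      intro j
      rw [pow_zero, one_mul]
      match j with
      | 0 => rw [hQ0, phi_one]; rfl
      | j+1 =>
        have := horthQ (j+1) 0 (by omega)
        rw [hQ0, mul_one] at this
        rw [this]
        rfl
    | succ n ih =>
      intro j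
      have hsplit : X ^ (n+1) * Q j = X ^ n * (X * Q j) := by
        rw [pow_succ]; ring
      match j with
      | 0 =>
        have : X ^ n * (X * Q 0) = X ^ n * Q 1 + C (β 0) * (X ^ n * Q 0) := by
          rw [hrec0]; ring
        rw [hsplit, this, phi_add μ hcs, phi_C_mul, ih 1, ih 0]
        rfl
      | j+1 =>
        have : X ^ n * (X * Q (j+1)) = X ^ n * Q (j+2) + C (β (j+1)) * (X ^ n * Q (j+1))
            + C (γ (j+1)) * (X ^ n * Q j) := by
          rw [hrec j]; ring
        rw [hsplit, this, phi_add μ hcs, phi_add μ hcs, phi_C_mul, phi_C_mul, ih (j+2),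
          ih (j+1), ih j]
        rfl
  have hmom : ∀ n, mom μ n = co β γ n 0 := by
    intro n
    have := W n 0
    rw [hQ0, mul_one] at this
    rw [← this]
    unfold phi mom
    simp
  exact ⟨Q, β, γ, hQmonic, hQdeg, fun n => ⟨(P n).leadingCoeff, hlc n, hPQ n⟩, hQ0, hQ1, hβ0,
    hγ1, hγpos, hrec0, hrec, hchiQ, hmom⟩
end OPS

theorem stmt19 (μ ν : Measure ℝ) [IsProbabilityMeasure μ] [IsProbabilityMeasure ν]
    (hcsμ : CompactSupp μ) (hcsν : CompactSupp ν)
    (hinfμ : (msupport μ).Infinite)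
    (hmean : ∫ x, x ∂μ = 0) (hvar : ∫ x, x ^ 2 ∂μ = 1)
    (p q : Polynomial ℝ) (hpq : ¬ (p = 0 ∧ q = 0))
    (P : ℕ → Polynomial ℝ) (lam : ℕ → ℝ)
    (hdeg : ∀ n, (P n).degree = (n : WithBot ℕ))
    (heig : ∀ n, p * Lop (mom ν) (Lop (mom μ) (P n)) + q * Lop (mom μ) (P n) = lam n • P n)
    (horth : ∀ n m : ℕ, n ≠ m → ∫ x, (P n).eval x * (P m).eval x ∂μ = 0) :
    ∀ n : ℕ, 1 ≤ n →
      mom μ n = ∑ i ∈ Finset.range (n - 1), mom ν i * mom μ (n - 2 - i) := by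
  classical
  obtain ⟨Q, β, γ, hQmon, hQdeg, hPQ, hQ0, hQ1, hβ0, hγ1, hγpos, hrec0, hrec, hchiQ, hmom⟩ :=
    OPSrec μ hcsμ hinfμ hmean hvar P hdeg horth
  have hm0 : mom μ 0 = 1 := by unfold mom; simp
  have hmν0 : mom ν 0 = 1 := by unfold mom; simp
  -- base level: A n = Lop (mom μ) (Q n)
  obtain ⟨hA0, hA1, hArec⟩ := Gmain (mom μ) β γ Q hm0 hQ0 hrec0 hchiQ hrec
  set A : ℕ → Polynomial ℝ := fun n => Lop (mom μ) (Q n) with hAdef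
  have hA0' : A 0 = 0 := hA0
  have hA1' : A 1 = 1 := hA1
  have hArec' : ∀ n, X * A (n+1) = A (n+2) + C (β (n+1)) * A (n+1) + C (γ (n+1)) * A n :=
    hArec
  have hAmon : ∀ n, (A (n+1)).Monic ∧ (A (n+1)).natDegree = n :=
    monic_seq β γ A hA0' hA1' hArec'
  have hA2 : A 2 = X - C (β 1) := by
    have h : X * A 1 = A 2 + C (β 1) * A 1 + C (γ 1) * A 0 := hArec 0
    rw [hA1', hA0', mul_one, mul_one, mul_zero, add_zero] at h
    linear_combination -h
  -- shifted moments
  set m' : ℕ → ℝ := fun i => co (fun i => β (i+1)) (fun i => γ (i+1)) i 0 with hm'def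
  have hm'0 : m' 0 = 1 := rfl
  have hchiX : ∀ n, chi m' (X ^ n) = m' n := fun n => chi_X_pow m' n
  -- chi m' (X^n * A (j+1)) = co β' γ' n j
  have Skey : ∀ j n, chi m' (X ^ n * A (j+1)) = co (fun i => β (i+1)) (fun i => γ (i+1)) n j := by
    have key : ∀ j, (∀ n, chi m' (X ^ n * A (j+1)) = co (fun i => β (i+1)) (fun i => γ (i+1)) n j)
        ∧ (∀ n, chi m' (X ^ n * A (j+2)) = co (fun i => β (i+1)) (fun i => γ (i+1)) n (j+1)) := by
      intro j
      induction j with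
      | zero =>
        constructor
        · intro n
          rw [hA1', mul_one, hchiX]
        · intro n
          rw [hA2]
          have hexp : X ^ n * (X - C (β 1)) = X ^ (n+1) - C (β 1) * X ^ n := by
            rw [pow_succ]; ring
          rw [hexp, chi_sub, chi_C_mul, hchiX, hchiX]
          have hco : m' (n+1) = co (fun i => β (i+1)) (fun i => γ (i+1)) n 1
              + β 1 * m' n := rfl
          rw [hco]; ring
      | succ j ih =>
        refine ⟨ih.2, fun n => ?_⟩
        have h : X * A (j+2) = A (j+3) + C (β (j+2)) * A (j+2) + C (γ (j+2)) * A (j+1) :=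
          hArec (j+1)
        have hB : A (j+3) = X * A (j+2) - C (β (j+2)) * A (j+2) - C (γ (j+2)) * A (j+1) := by
          rw [h]; ring
        have hexp : X ^ n * A (j+3) = X ^ (n+1) * A (j+2)
            - C (β (j+2)) * (X ^ n * A (j+2)) - C (γ (j+2)) * (X ^ n * A (j+1)) := by
          rw [hB, pow_succ]; ring
        rw [hexp, chi_sub, chi_sub, chi_C_mul, chi_C_mul, ih.2 (n+1), ih.2 n, ih.1 n]
        have hco : co (fun i => β (i+1)) (fun i => γ (i+1)) (n+1) (j+1)
            = co (fun i => β (i+1)) (fun i => γ (i+1)) n (j+2)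
              + β (j+2) * co (fun i => β (i+1)) (fun i => γ (i+1)) n (j+1)
              + γ (j+2) * co (fun i => β (i+1)) (fun i => γ (i+1)) n j := rfl
        rw [hco]; ring
    exact fun j => (key j).1
  have hpsi : ∀ n, chi m' (A (n+2)) = 0 := by
    intro n
    have h1 := Skey (n+1) 0
    rw [pow_zero, one_mul] at h1
    have h2 : chi m' (A (n+2)) = co (fun i => β (i+1)) (fun i => γ (i+1)) 0 (n+1) := h1
    rw [h2]
    rfl
  -- shifted level Gmain
  have hrec0' : X * A 1 = A 2 + C (β 1) * A 1 := by
    rw [hA1', hA2, mul_one, mul_one]; ring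
  obtain ⟨hB0, hB1, hBrec⟩ := Gmain m' (fun i => β (i+1)) (fun i => γ (i+1))
    (fun j => A (j+1)) hm'0 hA1' hrec0' hpsi (fun n => hArec (n+1))
  have hB0' : Lop m' (A 1) = 0 := hB0
  have hB1' : Lop m' (A 2) = 1 := hB1
  have hBrec' : ∀ n, X * Lop m' (A (n+2)) = Lop m' (A (n+3))
      + C (β (n+2)) * Lop m' (A (n+2)) + C (γ (n+2)) * Lop m' (A (n+1)) := hBrec
  -- coeff-0 of Q's
  have hQc0 : ∀ n, (Q (n+2)).coeff 0 = -(β (n+1) * (Q (n+1)).coeff 0 + γ (n+1) * (Q n).coeff 0) := by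
    intro n
    have h := congrArg (fun f => Polynomial.coeff f 0) (hrec n)
    simp only [Polynomial.mul_coeff_zero, Polynomial.coeff_add, Polynomial.coeff_C,
      Polynomial.coeff_X_zero, zero_mul, eq_self_iff_true, if_true] at h
    linarith [h]
  have hQ2c0 : (Q 2).coeff 0 = -1 := by
    rw [hQc0 0, hQ1, hQ0, hγ1]
    simp
  have hQ3c0 : (Q 3).coeff 0 = β 2 := by
    rw [hQc0 1, hQ2c0, hQ1]
    simp
  -- chain: coeff 0 of Lop m' (A (n+2)) = -(Q (n+2)).coeff 0
  have hch : ∀ n, (Lop m' (A (n+2))).coeff 0 = -(Q (n+2)).coeff 0 := by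
    have hB2 : Lop m' (A 3) = X - C (β 2) := by
      have h : X * Lop m' (A 2) = Lop m' (A 3) + C (β 2) * Lop m' (A 2)
          + C (γ 2) * Lop m' (A 1) := hBrec' 0
      rw [hB1', hB0', mul_one, mul_one, mul_zero, add_zero] at h
      linear_combination -h
    have hBc0 : ∀ n, (Lop m' (A (n+3))).coeff 0
        = -(β (n+2) * (Lop m' (A (n+2))).coeff 0 + γ (n+2) * (Lop m' (A (n+1))).coeff 0) := by
      intro n
      have h := congrArg (fun f => Polynomial.coeff f 0) (hBrec' n)
      simp only [Polynomial.mul_coeff_zero, Polynomial.coeff_add, Polynomial.coeff_C,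
        Polynomial.coeff_X_zero, zero_mul, eq_self_iff_true, if_true] at h
      linarith [h]
    have key : ∀ n, (Lop m' (A (n+2))).coeff 0 = -(Q (n+2)).coeff 0
        ∧ (Lop m' (A (n+3))).coeff 0 = -(Q (n+3)).coeff 0 := by
      intro n
      induction n with
      | zero =>
        constructor
        · rw [hB1', hQ2c0]; simp
        · rw [hB2, hQ3c0]; simp
      | succ n ih =>
        refine ⟨ih.2, ?_⟩
        have h1 := hBc0 (n+1)
        have h2 := hQc0 (n+2)
        rw [ih.1, ih.2] at h1
        rw [h1, h2]
        ring
    exact fun n => (key n).1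
  -- normalized eigen equations
  have hEq : ∀ n, p * Lop (mom ν) (A n) + q * A n = C (lam n) * Q n := by
    intro n
    obtain ⟨c, hc, hPc⟩ := hPQ n
    have h := heig n
    rw [hPc, Lop_C_mul, Lop_C_mul, Polynomial.smul_eq_C_mul] at h
    have h' : p * (C c * Lop (mom ν) (A n)) + q * (C c * A n)
        = C (lam n) * (C c * Q n) := h
    have h2 : C c * (p * Lop (mom ν) (A n) + q * A n) = C c * (C (lam n) * Q n) := by
      linear_combination h'
    exact mul_left_cancel₀ (Polynomial.C_ne_zero.mpr hc) h2
  have hLνA1 : Lop (mom ν) (A 1) = 0 := by rw [hA1']; exact Lop_one _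
  have hLνA2 : Lop (mom ν) (A 2) = 1 := by
    rw [hA2, Lop_sub, Lop_X, Lop_C, hmν0, sub_zero, Polynomial.C_1]
  have hq : q = C (lam 1) * X := by
    have h := hEq 1
    rw [hLνA1, hA1', mul_zero, mul_one, zero_add, hQ1] at h
    exact h
  have hQ2 : Q 2 = X * X - C (β 1) * X - 1 := by
    have h : X * Q 1 = Q 2 + C (β 1) * Q 1 + C (γ 1) * Q 0 := hrec 0
    rw [hQ1, hQ0, hγ1, Polynomial.C_1, mul_one] at h
    linear_combination -h
  obtain ⟨e, he, hp'⟩ : ∃ e, e = lam 2 - lam 1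
      ∧ p = C e * X ^ 2 - C (β 1 * e) * X - C (lam 2) := by
    refine ⟨lam 2 - lam 1, rfl, ?_⟩
    have h := hEq 2
    rw [hLνA2, hq, hA2, hQ2, mul_one] at h
    have hCe : (C (lam 2 - lam 1) : Polynomial ℝ) = C (lam 2) - C (lam 1) := by
      rw [Polynomial.C_sub]
    have hCbe : (C (β 1 * (lam 2 - lam 1)) : Polynomial ℝ)
        = C (β 1) * (C (lam 2) - C (lam 1)) := by
      rw [← Polynomial.C_sub, ← Polynomial.C_mul]
    rw [hCe, hCbe]
    have hsq : (X : Polynomial ℝ) ^ 2 = X * X := sq X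
    rw [hsq]
    linear_combination h
  have hgmon : ∀ n, (Lop (mom ν) (A (n+2))).Monic ∧ (Lop (mom ν) (A (n+2))).natDegree = n :=
    fun n => Lop_monic (mom ν) hmν0 (A (n+2)) n (hAmon (n+1)).1 (hAmon (n+1)).2
  -- eigenvalues are constant from level 2 on
  have hAtop : ∀ n, (A (n+2)).coeff (n+1) = 1 := by
    intro n
    have h := (hAmon (n+1)).1.coeff_natDegree
    rwa [(hAmon (n+1)).2] at h
  have hQtop : ∀ n, (Q n).coeff n = 1 := by
    intro n
    have h := (hQmon n).coeff_natDegree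
    rwa [hQdeg n] at h
  have hlam : ∀ n, lam (n+2) = lam 2 := by
    intro n
    have h := hEq (n+2)
    rw [hp', hq] at h
    have hgm := (hgmon n).1
    have hgd := (hgmon n).2
    have hsplit : (C e * X ^ 2 - C (β 1 * e) * X - C (lam 2)) * Lop (mom ν) (A (n+2))
          + C (lam 1) * X * A (n+2)
        = C e * (X ^ 2 * Lop (mom ν) (A (n+2))) - C (β 1 * e) * (X * Lop (mom ν) (A (n+2)))
          - C (lam 2) * Lop (mom ν) (A (n+2)) + C (lam 1) * (X * A (n+2)) := by ring
    rw [hsplit] at h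
    have hco := congrArg (fun f => Polynomial.coeff f (n+2)) h
    simp only [Polynomial.coeff_add, Polynomial.coeff_sub, Polynomial.coeff_C_mul] at hco
    have e1 : (X ^ 2 * Lop (mom ν) (A (n+2))).coeff (n+2) = 1 := by
      rw [Polynomial.coeff_X_pow_mul]
      have h := hgm.coeff_natDegree
      rwa [hgd] at h
    have e2 : (X * Lop (mom ν) (A (n+2))).coeff (n+2) = 0 := by
      rw [show n+2 = (n+1)+1 by omega, Polynomial.coeff_X_mul]
      exact Polynomial.coeff_eq_zero_of_natDegree_lt (by rw [hgd]; omega)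
    have e3 : (Lop (mom ν) (A (n+2))).coeff (n+2) = 0 :=
      Polynomial.coeff_eq_zero_of_natDegree_lt (by rw [hgd]; omega)
    have e4 : (X * A (n+2)).coeff (n+2) = 1 := by
      rw [show n+2 = (n+1)+1 by omega, Polynomial.coeff_X_mul]
      exact hAtop n
    have e5 : (C (lam (n+2)) * Q (n+2)).coeff (n+2) = lam (n+2) := by
      rw [Polynomial.coeff_C_mul, hQtop (n+2), mul_one]
    rw [e1, e2, e3, e4] at hco
    rw [hQtop (n+2), mul_one] at hco
    rw [he] at hco
    linarith [hco]
  -- lam 2 is nonzero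
  have hA3 : A 3 = X * (X - C (β 1)) - C (β 2) * (X - C (β 1)) - C (γ 2) := by
    have h : X * A 2 = A 3 + C (β 2) * A 2 + C (γ 2) * A 1 := hArec 1
    rw [hA2, hA1', mul_one] at h
    linear_combination -h
  have hlam2 : lam 2 ≠ 0 := by
    intro h0
    by_cases hl1 : lam 1 = 0
    · refine hpq ⟨?_, ?_⟩
      · rw [hp', he, h0, hl1]
        norm_num
      · rw [hq, hl1]
        simp
    · have hl3 : lam 3 = 0 := by
        have h := hlam 1
        rw [h0] at h
        exact h
      have h := hEq 3
      rw [hq, hp'] at h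
      have hCe : (C e : Polynomial ℝ) = -C (lam 1) := by
        rw [he, h0, zero_sub, Polynomial.C_neg]
      have hCbe : (C (β 1 * e) : Polynomial ℝ) = -(C (β 1) * C (lam 1)) := by
        rw [he, h0, zero_sub, mul_neg, Polynomial.C_neg, Polynomial.C_mul]
      rw [hCe, hCbe, h0, hl3, Polynomial.C_0] at h
      have key : C (lam 1) * (X * (A 3 - (X - C (β 1)) * Lop (mom ν) (A 3))) = 0 := by
        linear_combination h
      have hz : A 3 - (X - C (β 1)) * Lop (mom ν) (A 3) = 0 := by
        rcases mul_eq_zero.mp key with hk | hk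
        · exact absurd hk (Polynomial.C_ne_zero.mpr hl1)
        rcases mul_eq_zero.mp hk with hk2 | hk2
        · exact absurd hk2 Polynomial.X_ne_zero
        · exact hk2
      have hev := congrArg (Polynomial.eval (β 1)) hz
      rw [hA3] at hev
      simp only [Polynomial.eval_sub, Polynomial.eval_mul, Polynomial.eval_X,
        Polynomial.eval_C, Polynomial.eval_zero] at hev
      have hγ2 : γ 2 = 0 := by nlinarith [hev]
      exact absurd hγ2 (ne_of_gt (hγpos 1))
  -- constant-coefficient extraction from the eigen equation
  have hcoeff0 : ∀ n, (Lop (mom ν) (A (n+2))).coeff 0 = -(Q (n+2)).coeff 0 := by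
    intro n
    have h := hEq (n+2)
    rw [hp', hq, hlam n] at h
    have hco := congrArg (fun f => Polynomial.coeff f 0) h
    simp only [Polynomial.mul_coeff_zero, Polynomial.coeff_add, Polynomial.coeff_sub,
      Polynomial.coeff_C, Polynomial.coeff_X_zero, Polynomial.coeff_X_pow] at hco
    norm_num at hco
    have h2 : lam 2 * (Lop (mom ν) (A (n+2))).coeff 0
        = lam 2 * (-(Q (n+2)).coeff 0) := by linear_combination -hco
    exact mul_left_cancel₀ hlam2 h2
  -- conclude : moments of ν equal the shifted moments m'
  have hcoeq : ∀ n, (Lop (mom ν) (A (n+2))).coeff 0 = (Lop m' (A (n+2))).coeff 0 := by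
    intro n
    rw [hch n, hcoeff0 n]
  have hmν : ∀ k, mom ν k = m' k := by
    intro k
    induction k using Nat.strong_induction_on with
    | _ k ih =>
      have h := hcoeq k
      rw [Lop_coeff_zero (mom ν) (A (k+2)) (k+1) (by rw [(hAmon (k+1)).2]; omega),
          Lop_coeff_zero m' (A (k+2)) (k+1) (by rw [(hAmon (k+1)).2]; omega)] at h
      rw [Finset.sum_range_succ, Finset.sum_range_succ] at h
      rw [hAtop k, one_mul, one_mul] at h
      have hsums : ∑ j ∈ Finset.range k, (A (k+2)).coeff (j+1) * mom ν j
          = ∑ j ∈ Finset.range k, (A (k+2)).coeff (j+1) * m' j :=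
        Finset.sum_congr rfl fun j hj => by rw [ih j (Finset.mem_range.mp hj)]
      rw [hsums] at h
      linarith [h]
  -- final assembly
  intro n hn
  rw [hmom n, conv_co β γ hβ0 hγ1 n hn]
  refine Finset.sum_congr rfl fun i _ => ?_
  have h1 : mom ν i = co (fun i => β (i+1)) (fun i => γ (i+1)) i 0 := hmν i
  rw [h1, hmom (n-2-i)]
end
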